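/- arXiv:2207.04486 — 2 statements merged into one kernel-verified Lean document; each statement's English description precedes it below -/
import Mathlib

section
/- For every bounded continuous section f of π and every y ∈ Y, one has iD⁺f(y, t) = iD⁻f(y, t) for Lebesgue-almost every t ∈ (0, ∞). -/
open Metric Set Filter Topology MeasureTheory

/-- `F(t,y,z) = max_j f_j(z) + d(f(z), π⁻¹(y))² / (2t)`. -/
noncomputable def hlF {κ : ℕ} (Y : Set (EuclideanSpace ℝ (Fin κ)))
    (π : EuclideanSpace ℝ (Fin κ) → Y) (f : Y → EuclideanSpace ℝ (Fin κ))
    (t : ℝ) (y z : Y) : ℝ :=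
  (⨆ j, f z j) + (Metric.infDist (f z) (π ⁻¹' {y}))^2 / (2*t)

/-- The intrinsic Hopf–Lax semigroup `iQ_t f(y) = inf_{z ∈ Y} F(t,y,z)`. -/
noncomputable def iQ {κ : ℕ} (Y : Set (EuclideanSpace ℝ (Fin κ)))
    (π : EuclideanSpace ℝ (Fin κ) → Y) (f : Y → EuclideanSpace ℝ (Fin κ))
    (t : ℝ) (y : Y) : ℝ :=
  ⨅ z : Y, hlF Y π f t y z

/-- A minimizing sequence for `iQ_t f(y)`. -/
def IsMinSeq {κ : ℕ} (Y : Set (EuclideanSpace ℝ (Fin κ)))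
    (π : EuclideanSpace ℝ (Fin κ) → Y) (f : Y → EuclideanSpace ℝ (Fin κ))
    (t : ℝ) (y : Y) (u : ℕ → Y) : Prop :=
  Filter.Tendsto (fun n => hlF Y π f t y (u n)) Filter.atTop (nhds (iQ Y π f t y))

/-- `iD⁺f(y,t)`. -/
noncomputable def iDp {κ : ℕ} (Y : Set (EuclideanSpace ℝ (Fin κ)))
    (π : EuclideanSpace ℝ (Fin κ) → Y) (f : Y → EuclideanSpace ℝ (Fin κ))
    (y : Y) (t : ℝ) : ℝ :=
  sSup { a : ℝ | ∃ u : ℕ → Y, IsMinSeq Y π f t y u ∧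
    a = Filter.limsup (fun n => Metric.infDist (f (u n)) (π ⁻¹' {y})) Filter.atTop }

/-- `iD⁻f(y,t)`. -/
noncomputable def iDm {κ : ℕ} (Y : Set (EuclideanSpace ℝ (Fin κ)))
    (π : EuclideanSpace ℝ (Fin κ) → Y) (f : Y → EuclideanSpace ℝ (Fin κ))
    (y : Y) (t : ℝ) : ℝ :=
  sInf { a : ℝ | ∃ u : ℕ → Y, IsMinSeq Y π f t y u ∧
    a = Filter.liminf (fun n => Metric.infDist (f (u n)) (π ⁻¹' {y})) Filter.atTop }

lemma coord_abs_le_norm' {κ : ℕ} (x : EuclideanSpace ℝ (Fin κ)) (j : Fin κ) : |x j| ≤ ‖x‖ := by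
  rw [EuclideanSpace.norm_eq]
  have h1 : |x j| = Real.sqrt (‖x j‖ ^ 2) := by
    rw [Real.sqrt_sq_eq_abs, Real.norm_eq_abs, abs_abs]
  rw [h1]
  exact Real.sqrt_le_sqrt (Finset.single_le_sum (f := fun i => ‖x i‖ ^ 2)
    (fun i _ => sq_nonneg _) (Finset.mem_univ j))

section aux

variable {κ : ℕ} {Y : Set (EuclideanSpace ℝ (Fin κ))}
    {π : EuclideanSpace ℝ (Fin κ) → Y} {f : Y → EuclideanSpace ℝ (Fin κ)} {y : Y}
    {C m : ℝ}

lemma hlF_lower (hm : ∀ z : Y, m ≤ ⨆ j, f z j) {t : ℝ} (ht : 0 < t) (z : Y) :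
    m ≤ hlF Y π f t y z := by
  have h1 : 0 ≤ (Metric.infDist (f z) (π ⁻¹' {y}))^2 / (2*t) :=
    div_nonneg (sq_nonneg _) (by linarith)
  have h2 := hm z
  simp only [hlF]; linarith

lemma iQ_le_hlF (hm : ∀ z : Y, m ≤ ⨆ j, f z j) {t : ℝ} (ht : 0 < t) (z : Y) :
    iQ Y π f t y ≤ hlF Y π f t y z := by
  haveI : Nonempty Y := ⟨y⟩
  exact ciInf_le ⟨m, by rintro _ ⟨w, rfl⟩; exact hlF_lower hm ht w⟩ z

lemma exists_minSeq (hm : ∀ z : Y, m ≤ ⨆ j, f z j) {t : ℝ} (ht : 0 < t) :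
    ∃ u : ℕ → Y, IsMinSeq Y π f t y u := by
  have hne : (Set.range (fun z : Y => hlF Y π f t y z)).Nonempty := ⟨_, ⟨y, rfl⟩⟩
  have hbd : BddBelow (Set.range fun z : Y => hlF Y π f t y z) :=
    ⟨m, by rintro _ ⟨w, rfl⟩; exact hlF_lower hm ht w⟩
  obtain ⟨w, -, hw2, hw3⟩ := exists_seq_tendsto_sInf hne hbd
  choose u hu using hw3
  refine ⟨u, ?_⟩
  show Tendsto (fun n => hlF Y π f t y (u n)) atTop (𝓝 (⨅ z : Y, hlF Y π f t y z))
  rw [iInf]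
  have : (fun n => hlF Y π f t y (u n)) = w := funext fun n => hu n
  rw [this]; exact hw2

lemma seq_bounds {x : ℕ → ℝ} (h0 : ∀ n, 0 ≤ x n) (hC : ∀ n, x n ≤ C) :
    0 ≤ liminf x atTop ∧ liminf x atTop ≤ limsup x atTop ∧ limsup x atTop ≤ C := by
  have cob_le : IsCoboundedUnder (· ≤ ·) atTop x := isCoboundedUnder_le_of_le atTop h0
  have cob_ge : IsCoboundedUnder (· ≥ ·) atTop x := isCoboundedUnder_ge_of_le atTop hC
  have bdd_le : IsBoundedUnder (· ≤ ·) atTop x := isBoundedUnder_of ⟨C, hC⟩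
  have bdd_ge : IsBoundedUnder (· ≥ ·) atTop x := isBoundedUnder_of ⟨0, h0⟩
  exact ⟨le_liminf_of_le cob_ge (Eventually.of_forall h0),
    liminf_le_limsup bdd_le bdd_ge,
    limsup_le_of_le cob_le (Eventually.of_forall hC)⟩

lemma cross_ineq (hC : ∀ z : Y, Metric.infDist (f z) (π ⁻¹' {y}) ≤ C)
    (hm : ∀ z : Y, m ≤ ⨆ j, f z j) {t s : ℝ} (ht : 0 < t) (hts : t < s)
    {u v : ℕ → Y} (hu : IsMinSeq Y π f t y u) (hv : IsMinSeq Y π f s y v) :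
    limsup (fun n => Metric.infDist (f (u n)) (π ⁻¹' {y})) atTop ≤
      liminf (fun n => Metric.infDist (f (v n)) (π ⁻¹' {y})) atTop := by
  have hs : 0 < s := lt_trans ht hts
  set x : ℕ → ℝ := fun n => Metric.infDist (f (u n)) (π ⁻¹' {y}) with hxdef
  set z : ℕ → ℝ := fun n => Metric.infDist (f (v n)) (π ⁻¹' {y}) with hzdef
  have hx0 : ∀ n, 0 ≤ x n := fun n => Metric.infDist_nonneg
  have hz0 : ∀ n, 0 ≤ z n := fun n => Metric.infDist_nonneg
  have hxC : ∀ n, x n ≤ C := fun n => hC (u n)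
  have hzC : ∀ n, z n ≤ C := fun n => hC (v n)
  have hC0 : 0 ≤ C := le_trans (hx0 0) (hxC 0)
  set c : ℝ := 1/(2*t) - 1/(2*s) with hcdef
  have hc : 0 < c := by
    rw [hcdef, sub_pos]
    exact one_div_lt_one_div_of_lt (by linarith) (by linarith)
  have h_id : ∀ w : Y, hlF Y π f t y w - hlF Y π f s y w
      = c * (Metric.infDist (f w) (π ⁻¹' {y}))^2 := by
    intro w
    simp only [hlF, hcdef]
    field_simp
    ring
  set P : ℕ → ℝ := fun n => c * (x n)^2 with hPdef
  set Q : ℕ → ℝ := fun n => c * (z n)^2 with hQdef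
  have hP0 : ∀ n, 0 ≤ P n := fun n => mul_nonneg hc.le (sq_nonneg _)
  have hQ0 : ∀ n, 0 ≤ Q n := fun n => mul_nonneg hc.le (sq_nonneg _)
  have hPC : ∀ n, P n ≤ c * C^2 := fun n =>
    mul_le_mul_of_nonneg_left (pow_le_pow_left₀ (hx0 n) (hxC n) 2) hc.le
  have hQC : ∀ n, Q n ≤ c * C^2 := fun n =>
    mul_le_mul_of_nonneg_left (pow_le_pow_left₀ (hz0 n) (hzC n) 2) hc.le
  -- Step 1 : limsup P ≤ iQ t - iQ s
  have htends1 : Tendsto (fun n => hlF Y π f t y (u n) - iQ Y π f s y) atTop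
      (𝓝 (iQ Y π f t y - iQ Y π f s y)) := hu.sub_const _
  have step1 : limsup P atTop ≤ iQ Y π f t y - iQ Y π f s y := by
    have hPle : ∀ n, P n ≤ hlF Y π f t y (u n) - iQ Y π f s y := by
      intro n
      have h1 := h_id (u n)
      have h2 := iQ_le_hlF (π := π) (y := y) hm hs (u n)
      simp only [hPdef, hxdef]
      linarith
    calc limsup P atTop ≤ limsup (fun n => hlF Y π f t y (u n) - iQ Y π f s y) atTop :=
          limsup_le_limsup (Eventually.of_forall hPle)
            (isCoboundedUnder_le_of_le atTop hP0) htends1.isBoundedUnder_le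
      _ = iQ Y π f t y - iQ Y π f s y := htends1.limsup_eq
  -- Step 2 : iQ t - iQ s ≤ liminf Q
  have htends2 : Tendsto (fun n => iQ Y π f t y - hlF Y π f s y (v n)) atTop
      (𝓝 (iQ Y π f t y - iQ Y π f s y)) := tendsto_const_nhds.sub hv
  have step2 : iQ Y π f t y - iQ Y π f s y ≤ liminf Q atTop := by
    have hQge : ∀ n, iQ Y π f t y - hlF Y π f s y (v n) ≤ Q n := by
      intro n
      have h1 := h_id (v n)
      have h2 := iQ_le_hlF (π := π) (y := y) hm ht (v n)
      simp only [hQdef, hzdef]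
      linarith
    calc iQ Y π f t y - iQ Y π f s y
        = liminf (fun n => iQ Y π f t y - hlF Y π f s y (v n)) atTop := htends2.liminf_eq.symm
      _ ≤ liminf Q atTop := liminf_le_liminf (Eventually.of_forall hQge)
            htends2.isBoundedUnder_ge (isCoboundedUnder_ge_of_le atTop hQC)
  have key : limsup P atTop ≤ liminf Q atTop := le_trans step1 step2
  -- final epsilon argument
  obtain ⟨hB0, -, -⟩ := seq_bounds (C := C) hz0 hzC
  set A := limsup x atTop with hAdef
  set B := liminf z atTop with hBdef
  show A ≤ B
  refine le_of_forall_pos_le_add fun ε hε => ?_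
  set δ := ε/2 with hδdef
  have hδ : 0 < δ := by positivity
  by_cases hcase : A - δ < 0
  · linarith
  · push_neg at hcase
    have freq1 : ∃ᶠ n in atTop, A - δ < x n :=
      frequently_lt_of_lt_limsup (isCoboundedUnder_le_of_le atTop hx0) (by linarith)
    have stepA : c * (A - δ)^2 ≤ limsup P atTop := by
      refine le_limsup_of_frequently_le ?_ (isBoundedUnder_of ⟨c * C^2, hPC⟩)
      refine freq1.mono fun n hn => ?_
      exact mul_le_mul_of_nonneg_left (by nlinarith [hx0 n]) hc.le
    have freq2 : ∃ᶠ n in atTop, z n < B + δ :=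
      frequently_lt_of_liminf_lt (isCoboundedUnder_ge_of_le atTop hzC) (by linarith)
    have stepB : liminf Q atTop ≤ c * (B + δ)^2 := by
      refine liminf_le_of_frequently_le ?_ (isBoundedUnder_of ⟨0, hQ0⟩)
      refine freq2.mono fun n hn => ?_
      exact mul_le_mul_of_nonneg_left (by nlinarith [hz0 n]) hc.le
    have hsq : (A - δ)^2 ≤ (B + δ)^2 :=
      le_of_mul_le_mul_left (by linarith [le_trans (le_trans stepA key) stepB]) hc
    have : A - δ ≤ B + δ := by nlinarith
    linarith

end aux

theorem stmt_9 (κ : ℕ) (hκ : 1 ≤ κ)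
    (Y : Set (EuclideanSpace ℝ (Fin κ))) (hY : Y.Nonempty) (hYb : Bornology.IsBounded Y)
    (π : EuclideanSpace ℝ (Fin κ) → Y) (hπc : Continuous π) (hπo : IsOpenMap π)
    (hπs : Function.Surjective π)
    (f : Y → EuclideanSpace ℝ (Fin κ)) (hfc : Continuous f)
    (hfb : Bornology.IsBounded (Set.range f)) (hsec : ∀ y : Y, π (f y) = y)

    (y : Y) :
    ∀ᵐ t ∂(MeasureTheory.volume.restrict (Set.Ioi (0:ℝ))),
      iDp Y π f y t = iDm Y π f y t := by
  haveI : Nonempty (Fin κ) := ⟨⟨0, hκ⟩⟩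
  haveI : Nonempty Y := ⟨y⟩
  -- constants
  obtain ⟨C, hR⟩ := Metric.isBounded_iff.1 hfb
  have hfy_mem : f y ∈ π ⁻¹' {y} := by
    simp only [Set.mem_preimage, Set.mem_singleton_iff, hsec y]
  have hC : ∀ z : Y, Metric.infDist (f z) (π ⁻¹' {y}) ≤ C := fun z =>
    le_trans (Metric.infDist_le_dist_of_mem hfy_mem) (hR ⟨z, rfl⟩ ⟨y, rfl⟩)
  have hC0 : 0 ≤ C := le_trans Metric.infDist_nonneg (hC y)
  set j0 : Fin κ := ⟨0, hκ⟩ with hj0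
  set m : ℝ := f y j0 - C with hmdef
  have hm : ∀ z : Y, m ≤ ⨆ j, f z j := by
    intro z
    have habs : |f y j0 - f z j0| ≤ C := by
      calc |f y j0 - f z j0| = |(f y - f z) j0| := by norm_num
        _ ≤ ‖f y - f z‖ := coord_abs_le_norm' _ _
        _ = dist (f y) (f z) := (dist_eq_norm _ _).symm
        _ ≤ C := hR ⟨y, rfl⟩ ⟨z, rfl⟩
    have h1 : m ≤ f z j0 := by
      rw [hmdef]
      have := abs_le.1 habs
      linarith [this.2]
    exact le_trans h1 (le_ciSup (Set.finite_range _).bddAbove j0)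
  -- bounds on elements of the defining sets
  have elem_bound : ∀ t : ℝ, ∀ u : ℕ → Y,
      0 ≤ liminf (fun n => Metric.infDist (f (u n)) (π ⁻¹' {y})) atTop ∧
      liminf (fun n => Metric.infDist (f (u n)) (π ⁻¹' {y})) atTop ≤
        limsup (fun n => Metric.infDist (f (u n)) (π ⁻¹' {y})) atTop ∧
      limsup (fun n => Metric.infDist (f (u n)) (π ⁻¹' {y})) atTop ≤ C := by
    intro t u
    exact seq_bounds (fun n => Metric.infDist_nonneg) (fun n => hC (u n))
  -- basic facts on iDm, iDp
  have hiDm_nonneg : ∀ t : ℝ, 0 ≤ iDm Y π f y t := by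
    intro t
    apply Real.sInf_nonneg
    rintro a ⟨u, hu, rfl⟩
    exact (elem_bound t u).1
  have hiDm_le_iDp : ∀ t : ℝ, 0 < t → iDm Y π f y t ≤ iDp Y π f y t := by
    intro t ht
    obtain ⟨u, hu⟩ := exists_minSeq (π := π) (y := y) hm ht
    have h1 : iDm Y π f y t ≤ liminf (fun n => Metric.infDist (f (u n)) (π ⁻¹' {y})) atTop := by
      apply csInf_le
      · exact ⟨0, by rintro a ⟨w, hw, rfl⟩; exact (elem_bound t w).1⟩
      · exact ⟨u, hu, rfl⟩
    have h2 : limsup (fun n => Metric.infDist (f (u n)) (π ⁻¹' {y})) atTop ≤ iDp Y π f y t := by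
      apply le_csSup
      · exact ⟨C, by rintro a ⟨w, hw, rfl⟩; exact (elem_bound t w).2.2⟩
      · exact ⟨u, hu, rfl⟩
    exact le_trans h1 (le_trans (elem_bound t u).2.1 h2)
  have hcross : ∀ t s : ℝ, 0 < t → t < s → iDp Y π f y t ≤ iDm Y π f y s := by
    intro t s ht hts
    have hs : 0 < s := lt_trans ht hts
    obtain ⟨v₀, hv₀⟩ := exists_minSeq (π := π) (y := y) hm hs
    obtain ⟨u₀, hu₀⟩ := exists_minSeq (π := π) (y := y) hm ht
    simp only [iDp, iDm]
    refine le_csInf ⟨_, ⟨v₀, hv₀, rfl⟩⟩ ?_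
    rintro b ⟨v, hv, rfl⟩
    refine csSup_le ⟨_, ⟨u₀, hu₀, rfl⟩⟩ ?_
    rintro a ⟨u, hu, rfl⟩
    exact cross_ineq hC hm ht hts hu hv
  -- monotone extension
  set H : ℝ → ℝ := fun r => if 0 < r then iDm Y π f y r else 0 with hHdef
  have hmono : Monotone H := by
    intro r1 r2 h12
    simp only [hHdef]
    split_ifs with h1 h2
    · rcases eq_or_lt_of_le h12 with rfl | hlt
      · exact le_refl _
      · exact le_trans (hiDm_le_iDp r1 h1) (hcross r1 r2 h1 hlt)
    · exact absurd (lt_of_lt_of_le h1 h12) h2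
    · exact hiDm_nonneg r2
    · exact le_refl _
  -- a.e. continuity
  have hnull : (volume : Measure ℝ) {r | ¬ ContinuousAt H r} = 0 :=
    Set.Countable.measure_zero hmono.countable_not_continuousAt _
  have hae1 : ∀ᵐ r ∂(volume : Measure ℝ), ContinuousAt H r := by
    rw [ae_iff]; exact hnull
  filter_upwards [ae_restrict_of_ae hae1, ae_restrict_mem measurableSet_Ioi] with t hcont ht
  have ht0 : (0:ℝ) < t := ht
  refine le_antisymm ?_ (hiDm_le_iDp t ht0)
  have h1 : ∀ᶠ s in 𝓝[>] t, iDp Y π f y t ≤ H s := by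
    filter_upwards [self_mem_nhdsWithin] with s hs
    have hts : t < s := hs
    simp only [hHdef]
    rw [if_pos (lt_trans ht0 hts)]
    exact hcross t s ht0 hts
  have h2 : Tendsto H (𝓝[>] t) (𝓝 (H t)) := hcont.tendsto.mono_left nhdsWithin_le_nhds
  have h3 : iDp Y π f y t ≤ H t := ge_of_tendsto h2 h1
  have h4 : H t = iDm Y π f y t := by
    simp only [hHdef]; rw [if_pos ht0]
  rwa [h4] at h3
end

section
/- For every bounded continuous section f of π, every y ∈ Y and every t > 0, the left derivative of s ↦ iQ_s f(y) at t exists and equals −(iD⁻f(y, t))²/(2t²), i.e. lim_{s → t⁻} (iQ_s f(y) − iQ_t f(y))/(s − t) = −(iD⁻f(y, t))²/(2t²). -/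
open Metric Set Filter Topology MeasureTheory

/-
With `g z = max_j f_j(z)` and `D z = d(f(z), π⁻¹(y))` we have
`iQ_s f(y) = Φ(s) := inf_z g z + D(z)² / (2s)`. Put `c(s) = 1/(2s) - 1/(2t) = (t - s)/(2st)`.
For `s < t`, testing `Φ(s)` along a minimizing sequence for `Φ(t)` whose distances have `liminf`
close to `D⁻ = iD⁻f(y, t)` gives `Φ(s) - Φ(t) ≤ D⁻² c(s)`, i.e. the slope at `s` is at least
`-D⁻²/(2st)`. Conversely, if `z_s` minimizes `Φ(s)` up to `(t - s)²` then
`Φ(t) ≤ Φ(s) + (t - s)² - D(z_s)² c(s)`, so the slope is at most `-D(z_s)²/(2st) + (t - s)`.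
Comparing the two bounds gives `D(z_s)² ≤ D⁻² + O(t - s)`, while `(z_s)` is minimizing for `Φ(t)`,
so every limit point of `D(z_s)` is at least `D⁻`. Hence `D(z_s) → D⁻` as `s → t⁻` and the slopes
are squeezed to `-D⁻²/(2t²)`.
-/

section HopfLax

variable {Z : Type*} {g D : Z → ℝ} {s t : ℝ}

noncomputable def hopfLaxCost (g D : Z → ℝ) (t : ℝ) (z : Z) : ℝ := g z + D z ^ 2 / (2 * t)

noncomputable def hopfLax (g D : Z → ℝ) (t : ℝ) : ℝ := ⨅ z, hopfLaxCost g D t z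

def IsHopfLaxMinimizing (g D : Z → ℝ) (t : ℝ) (u : ℕ → Z) : Prop :=
  Tendsto (fun n => hopfLaxCost g D t (u n)) atTop (𝓝 (hopfLax g D t))

noncomputable def hopfLaxMinDist (g D : Z → ℝ) (t : ℝ) : ℝ :=
  sInf {a | ∃ u, IsHopfLaxMinimizing g D t u ∧ a = liminf (fun n => D (u n)) atTop}

lemma hopfLaxCost_eq_add (hs : s ≠ 0) (ht : t ≠ 0) (z : Z) :
    hopfLaxCost g D s z = hopfLaxCost g D t z + D z ^ 2 * ((t - s) / (2 * s * t)) := by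
  unfold hopfLaxCost
  field_simp
  ring

lemma bddBelow_range_hopfLaxCost (hg : BddBelow (range g)) (ht : 0 ≤ t) :
    BddBelow (range (hopfLaxCost g D t)) := by
  obtain ⟨m, hm⟩ := hg
  refine ⟨m, forall_mem_range.2 fun z => ?_⟩
  have hgz := hm (mem_range_self z)
  have hDz : 0 ≤ D z ^ 2 / (2 * t) := by positivity
  unfold hopfLaxCost
  linarith

lemma hopfLax_le_hopfLaxCost (hg : BddBelow (range g)) (ht : 0 ≤ t) (z : Z) :
    hopfLax g D t ≤ hopfLaxCost g D t z :=
  ciInf_le (bddBelow_range_hopfLaxCost hg ht) z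

lemma exists_isHopfLaxMinimizing [Nonempty Z] (hg : BddBelow (range g)) (ht : 0 ≤ t) :
    ∃ u, IsHopfLaxMinimizing g D t u := by
  obtain ⟨v, -, hv, hvmem⟩ :=
    exists_seq_tendsto_sInf (range_nonempty _) (bddBelow_range_hopfLaxCost (D := D) hg ht)
  choose u hu using hvmem
  refine ⟨u, ?_⟩
  simpa only [IsHopfLaxMinimizing, hopfLax, ← sInf_range, hu] using hv

lemma isCoboundedUnder_ge_comp (hD : BddAbove (range D)) (u : ℕ → Z) :
    IsCoboundedUnder (· ≥ ·) atTop (fun n => D (u n)) :=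
  (hD.mono (range_comp_subset_range u D)).isBoundedUnder_of_range.isCoboundedUnder_ge

lemma liminf_comp_nonneg (hD0 : ∀ z, 0 ≤ D z) (hD : BddAbove (range D)) (u : ℕ → Z) :
    0 ≤ liminf (fun n => D (u n)) atTop :=
  le_liminf_of_le (isCoboundedUnder_ge_comp hD u) (Eventually.of_forall fun n => hD0 (u n))

lemma hopfLaxMinDist_nonneg (hD0 : ∀ z, 0 ≤ D z) (hD : BddAbove (range D)) :
    0 ≤ hopfLaxMinDist g D t :=
  Real.sInf_nonneg fun _ ⟨u, _, ha⟩ => ha ▸ liminf_comp_nonneg hD0 hD u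

lemma hopfLaxMinDist_le_of_tendsto (hD0 : ∀ z, 0 ≤ D z) (hD : BddAbove (range D)) {u : ℕ → Z}
    {d : ℝ} (hu : IsHopfLaxMinimizing g D t u) (hd : Tendsto (fun n => D (u n)) atTop (𝓝 d)) :
    hopfLaxMinDist g D t ≤ d :=
  csInf_le ⟨0, fun _ ⟨v, _, ha⟩ => ha ▸ liminf_comp_nonneg hD0 hD v⟩ ⟨u, hu, hd.liminf_eq.symm⟩

lemma hopfLax_le_add_of_frequently_le (hg : BddBelow (range g)) (hD0 : ∀ z, 0 ≤ D z)
    (hs : 0 < s) (hst : s ≤ t) {u : ℕ → Z} (hu : IsHopfLaxMinimizing g D t u) {r : ℝ}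
    (hr : ∃ᶠ n in atTop, D (u n) ≤ r) :
    hopfLax g D s ≤ hopfLax g D t + r ^ 2 * ((t - s) / (2 * s * t)) := by
  have ht : 0 < t := hs.trans_le hst
  have hc : 0 ≤ (t - s) / (2 * s * t) := div_nonneg (sub_nonneg.2 hst) (by positivity)
  refine le_of_forall_pos_le_add fun ε hε => ?_
  obtain ⟨n, hn, hεn⟩ :=
    (hr.and_eventually (hu.eventually_lt_const (lt_add_of_pos_right _ hε))).exists
  have hsq : D (u n) ^ 2 ≤ r ^ 2 := pow_le_pow_left₀ (hD0 _) hn 2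
  calc hopfLax g D s ≤ hopfLaxCost g D s (u n) := hopfLax_le_hopfLaxCost hg hs.le _
    _ = hopfLaxCost g D t (u n) + D (u n) ^ 2 * ((t - s) / (2 * s * t)) :=
      hopfLaxCost_eq_add hs.ne' ht.ne' _
    _ ≤ hopfLax g D t + ε + r ^ 2 * ((t - s) / (2 * s * t)) := by gcongr
    _ = _ := by ring

lemma hopfLax_sub_hopfLax_le [Nonempty Z] (hg : BddBelow (range g)) (hD0 : ∀ z, 0 ≤ D z)
    (hD : BddAbove (range D)) (hs : 0 < s) (hst : s ≤ t) :
    hopfLax g D s - hopfLax g D t ≤ hopfLaxMinDist g D t ^ 2 * ((t - s) / (2 * s * t)) := by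
  set c := (t - s) / (2 * s * t)
  set dm := hopfLaxMinDist g D t
  have hr : ∀ r > dm, hopfLax g D s - hopfLax g D t ≤ r ^ 2 * c := by
    intro r hr
    obtain ⟨u, hu⟩ := exists_isHopfLaxMinimizing (D := D) hg (hs.le.trans hst)
    obtain ⟨_, ⟨v, hv, rfl⟩, hlt⟩ :=
      exists_lt_of_csInf_lt (s := {a | ∃ u, IsHopfLaxMinimizing g D t u ∧
        a = liminf (fun n => D (u n)) atTop}) ⟨_, u, hu, rfl⟩ hr
    have hfreq := (frequently_lt_of_liminf_lt (isCoboundedUnder_ge_comp hD v) hlt).mono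
      fun _ => le_of_lt
    linarith [hopfLax_le_add_of_frequently_le hg hD0 hs hst hv hfreq]
  have hcont : Tendsto (fun r => r ^ 2 * c) (𝓝[>] dm) (𝓝 (dm ^ 2 * c)) :=
    ((continuous_pow 2).mul continuous_const).continuousAt.tendsto.mono_left nhdsWithin_le_nhds
  exact ge_of_tendsto hcont (eventually_nhdsWithin_of_forall hr)

section NearMinimizer

variable {z : Z}

lemma hopfLaxCost_le_of_near [Nonempty Z] (hg : BddBelow (range g)) (hD0 : ∀ z, 0 ≤ D z)
    (hD : BddAbove (range D)) (hs : 0 < s) (hst : s ≤ t)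
    (hz : hopfLaxCost g D s z ≤ hopfLax g D s + (t - s) ^ 2) :
    hopfLaxCost g D t z ≤
      hopfLax g D t + hopfLaxMinDist g D t ^ 2 * ((t - s) / (2 * s * t)) + (t - s) ^ 2 := by
  have ht : 0 < t := hs.trans_le hst
  have hc : 0 ≤ D z ^ 2 * ((t - s) / (2 * s * t)) :=
    mul_nonneg (sq_nonneg _) (div_nonneg (sub_nonneg.2 hst) (by positivity))
  have hA := hopfLax_sub_hopfLax_le hg hD0 hD hs hst
  rw [hopfLaxCost_eq_add hs.ne' ht.ne'] at hz
  linarith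

lemma sq_mul_sub_le_hopfLax_sub (hg : BddBelow (range g)) (hs : 0 < s) (hst : s ≤ t)
    (hz : hopfLaxCost g D s z ≤ hopfLax g D s + (t - s) ^ 2) :
    D z ^ 2 * ((t - s) / (2 * s * t)) - (t - s) ^ 2 ≤ hopfLax g D s - hopfLax g D t := by
  have ht : 0 < t := hs.trans_le hst
  have hmin := hopfLax_le_hopfLaxCost (D := D) hg ht.le z
  rw [hopfLaxCost_eq_add hs.ne' ht.ne'] at hz
  linarith

lemma neg_sq_div_le_slope_hopfLax [Nonempty Z] (hg : BddBelow (range g)) (hD0 : ∀ z, 0 ≤ D z)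
    (hD : BddAbove (range D)) (hs : 0 < s) (hst : s < t) :
    -hopfLaxMinDist g D t ^ 2 / (2 * s * t) ≤ slope (hopfLax g D) t s := by
  have ht : 0 < t := hs.trans hst
  rw [slope_def_field, le_div_iff_of_neg (sub_neg.2 hst)]
  calc -hopfLaxMinDist g D t ^ 2 / (2 * s * t) * (s - t)
      = hopfLaxMinDist g D t ^ 2 * ((t - s) / (2 * s * t)) := by field_simp; ring
    _ ≥ hopfLax g D s - hopfLax g D t := hopfLax_sub_hopfLax_le hg hD0 hD hs hst.le

lemma slope_hopfLax_le_of_near (hg : BddBelow (range g)) (hs : 0 < s) (hst : s < t)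
    (hz : hopfLaxCost g D s z ≤ hopfLax g D s + (t - s) ^ 2) :
    slope (hopfLax g D) t s ≤ -D z ^ 2 / (2 * s * t) + (t - s) := by
  have ht : 0 < t := hs.trans hst
  rw [slope_def_field, div_le_iff_of_neg (sub_neg.2 hst)]
  calc hopfLax g D s - hopfLax g D t ≥ D z ^ 2 * ((t - s) / (2 * s * t)) - (t - s) ^ 2 :=
        sq_mul_sub_le_hopfLax_sub hg hs hst.le hz
    _ = (-D z ^ 2 / (2 * s * t) + (t - s)) * (s - t) := by field_simp; ring

lemma sq_le_of_near [Nonempty Z] (hg : BddBelow (range g)) (hD0 : ∀ z, 0 ≤ D z)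
    (hD : BddAbove (range D)) (hs : 0 < s) (hst : s < t)
    (hz : hopfLaxCost g D s z ≤ hopfLax g D s + (t - s) ^ 2) :
    D z ^ 2 ≤ hopfLaxMinDist g D t ^ 2 + 2 * s * t * (t - s) := by
  have ht : 0 < t := hs.trans hst
  have hc : 0 < (t - s) / (2 * s * t) := div_pos (sub_pos.2 hst) (by positivity)
  have hA := hopfLax_sub_hopfLax_le hg hD0 hD hs hst.le
  have hB := sq_mul_sub_le_hopfLax_sub hg hs hst.le hz
  have hsq : (t - s) ^ 2 = 2 * s * t * (t - s) * ((t - s) / (2 * s * t)) := by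
    field_simp
  refine sub_le_iff_le_add'.1 (le_of_mul_le_mul_right ?_ hc)
  linarith

end NearMinimizer

section NearMinimizerCurve

variable [Nonempty Z] {z : ℝ → Z}

lemma isHopfLaxMinimizing_of_near (hg : BddBelow (range g)) (hD0 : ∀ z, 0 ≤ D z)
    (hD : BddAbove (range D)) (ht : 0 < t)
    (hz : ∀ s ∈ Ioo 0 t, hopfLaxCost g D s (z s) ≤ hopfLax g D s + (t - s) ^ 2)
    {σ : ℕ → ℝ} (hσ : Tendsto σ atTop (𝓝[<] t)) :
    IsHopfLaxMinimizing g D t (fun k => z (σ k)) := by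
  have hmem : ∀ᶠ k in atTop, σ k ∈ Ioo 0 t := hσ (Ioo_mem_nhdsLT ht)
  have hbound : ContinuousAt (fun s => hopfLax g D t +
      hopfLaxMinDist g D t ^ 2 * ((t - s) / (2 * s * t)) + (t - s) ^ 2) t := by
    fun_prop (disch := positivity)
  have hupper := hbound.tendsto.comp (tendsto_nhds_of_tendsto_nhdsWithin hσ)
  simp only [sub_self, zero_div, mul_zero, add_zero, ne_eq, OfNat.ofNat_ne_zero,
    not_false_eq_true, zero_pow] at hupper
  exact tendsto_of_tendsto_of_tendsto_of_le_of_le' tendsto_const_nhds hupper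
    (Eventually.of_forall fun k => hopfLax_le_hopfLaxCost hg ht.le _)
    (hmem.mono fun k hk => hopfLaxCost_le_of_near hg hD0 hD hk.1 hk.2.le (hz _ hk))

lemma eq_hopfLaxMinDist_of_tendsto (hg : BddBelow (range g)) (hD0 : ∀ z, 0 ≤ D z)
    (hD : BddAbove (range D)) (ht : 0 < t)
    (hz : ∀ s ∈ Ioo 0 t, hopfLaxCost g D s (z s) ≤ hopfLax g D s + (t - s) ^ 2)
    {σ : ℕ → ℝ} (hσ : Tendsto σ atTop (𝓝[<] t)) {d : ℝ}
    (hd : Tendsto (fun k => D (z (σ k))) atTop (𝓝 d)) :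
    d = hopfLaxMinDist g D t := by
  have hmem : ∀ᶠ k in atTop, σ k ∈ Ioo 0 t := hσ (Ioo_mem_nhdsLT ht)
  have hbound : ContinuousAt (fun s => hopfLaxMinDist g D t ^ 2 + 2 * s * t * (t - s)) t := by
    fun_prop
  have hupper := hbound.tendsto.comp (tendsto_nhds_of_tendsto_nhdsWithin hσ)
  simp only [sub_self, mul_zero, add_zero] at hupper
  have hsq : d ^ 2 ≤ hopfLaxMinDist g D t ^ 2 := le_of_tendsto_of_tendsto (hd.pow 2) hupper
    (hmem.mono fun k hk => sq_le_of_near hg hD0 hD hk.1 hk.2 (hz _ hk))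
  refine le_antisymm ?_ (hopfLaxMinDist_le_of_tendsto hD0 hD
    (isHopfLaxMinimizing_of_near hg hD0 hD ht hz hσ) hd)
  exact (le_abs_self d).trans ((sq_le_sq.1 hsq).trans_eq (abs_of_nonneg
    (hopfLaxMinDist_nonneg hD0 hD)))

lemma tendsto_hopfLaxMinDist_of_near (hg : BddBelow (range g)) (hD0 : ∀ z, 0 ≤ D z)
    (hD : BddAbove (range D)) (ht : 0 < t)
    (hz : ∀ s ∈ Ioo 0 t, hopfLaxCost g D s (z s) ≤ hopfLax g D s + (t - s) ^ 2) :
    Tendsto (fun s => D (z s)) (𝓝[<] t) (𝓝 (hopfLaxMinDist g D t)) := by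
  obtain ⟨M, hM⟩ := hD
  refine tendsto_of_subseq_tendsto fun σ hσ => ?_
  obtain ⟨d, -, φ, hφ, hd⟩ := tendsto_subseq_of_bounded (isBounded_Icc 0 M)
    (x := fun k => D (z (σ k))) fun k => ⟨hD0 _, hM (mem_range_self _)⟩
  exact ⟨φ, eq_hopfLaxMinDist_of_tendsto hg hD0 ⟨M, hM⟩ ht hz (hσ.comp hφ.tendsto_atTop) hd ▸ hd⟩

end NearMinimizerCurve

theorem hasDerivWithinAt_hopfLax_Iio [Nonempty Z] (hg : BddBelow (range g))
    (hD0 : ∀ z, 0 ≤ D z) (hD : BddAbove (range D)) (ht : 0 < t) :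
    HasDerivWithinAt (hopfLax g D) (-hopfLaxMinDist g D t ^ 2 / (2 * t ^ 2)) (Iio t) t := by
  -- The error `(t - s) ^ 2` of these near-minimizers is `o(t - s)`, so it does not affect slopes.
  choose! z hz using fun s (hs : s ∈ Ioo 0 t) =>
    exists_lt_of_ciInf_lt (lt_add_of_pos_right (hopfLax g D s) (pow_pos (sub_pos.2 hs.2) 2))
  replace hz : ∀ s ∈ Ioo 0 t, hopfLaxCost g D s (z s) ≤ hopfLax g D s + (t - s) ^ 2 :=
    fun s hs => (hz s hs).le
  have hmem : ∀ᶠ s in 𝓝[<] t, s ∈ Ioo 0 t := Ioo_mem_nhdsLT ht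
  have hid : Tendsto (fun s => s) (𝓝[<] t) (𝓝 t) := tendsto_id.mono_left nhdsWithin_le_nhds
  have hlim : -hopfLaxMinDist g D t ^ 2 / (2 * t ^ 2) =
      -hopfLaxMinDist g D t ^ 2 / (2 * t * t) + (t - t) := by ring
  have hlower : Tendsto (fun s => -hopfLaxMinDist g D t ^ 2 / (2 * s * t)) (𝓝[<] t)
      (𝓝 (-hopfLaxMinDist g D t ^ 2 / (2 * t ^ 2))) := by
    rw [hlim, sub_self, add_zero]
    exact tendsto_const_nhds.div ((hid.const_mul 2).mul_const t) (by positivity)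
  have hupper : Tendsto (fun s => -D (z s) ^ 2 / (2 * s * t) + (t - s)) (𝓝[<] t)
      (𝓝 (-hopfLaxMinDist g D t ^ 2 / (2 * t ^ 2))) := by
    rw [hlim]
    exact (((tendsto_hopfLaxMinDist_of_near hg hD0 hD ht hz).pow 2).neg.div
      ((hid.const_mul 2).mul_const t) (by positivity)).add (tendsto_const_nhds.sub hid)
  rw [hasDerivWithinAt_iff_tendsto_slope' self_notMem_Iio]
  exact tendsto_of_tendsto_of_tendsto_of_le_of_le' hlower hupper
    (hmem.mono fun s hs => neg_sq_div_le_slope_hopfLax hg hD0 hD hs.1 hs.2)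
    (hmem.mono fun s hs => slope_hopfLax_le_of_near hg hs.1 hs.2 (hz s hs))

end HopfLax

lemma neg_norm_le_iSup_apply {ι : Type*} [Fintype ι] (x : EuclideanSpace ℝ ι) :
    -‖x‖ ≤ ⨆ j, x j := by
  cases isEmpty_or_nonempty ι with
  | inl _ => simp [Real.iSup_of_isEmpty]
  | inr h =>
    obtain ⟨j⟩ := h
    exact (neg_le_of_abs_le (PiLp.norm_apply_le x j)).trans
      (le_ciSup (Set.finite_range _).bddAbove j)

theorem stmt_11_general (κ : ℕ)
    (Y : Set (EuclideanSpace ℝ (Fin κ)))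
    (π : EuclideanSpace ℝ (Fin κ) → Y)
    (f : Y → EuclideanSpace ℝ (Fin κ))
    (hfb : Bornology.IsBounded (Set.range f))

    (y : Y) (t : ℝ) (ht : 0 < t) :
    HasDerivWithinAt (fun s => iQ Y π f s y)
      (-(iDm Y π f y t)^2 / (2*t^2)) (Set.Iio t) t := by
  have : Nonempty Y := ⟨y⟩
  obtain ⟨C, hC⟩ := isBounded_iff_forall_norm_le.1 hfb
  have hg : BddBelow (range fun z => ⨆ j, f z j) :=
    ⟨-C, forall_mem_range.2 fun z =>
      (neg_le_neg (hC _ (mem_range_self z))).trans (neg_norm_le_iSup_apply _)⟩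
  have hD : BddAbove (range fun z => infDist (f z) (π ⁻¹' {y})) := by
    rw [range_comp' (infDist · (π ⁻¹' {y})) f]
    exact ((lipschitz_infDist_pt _).isBounded_image hfb).bddAbove
  exact hasDerivWithinAt_hopfLax_Iio hg (fun _ => infDist_nonneg) hD ht

theorem stmt_11 (κ : ℕ) (hκ : 1 ≤ κ)
    (Y : Set (EuclideanSpace ℝ (Fin κ))) (hY : Y.Nonempty) (hYb : Bornology.IsBounded Y)
    (π : EuclideanSpace ℝ (Fin κ) → Y) (hπc : Continuous π) (hπo : IsOpenMap π)
    (hπs : Function.Surjective π)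
    (f : Y → EuclideanSpace ℝ (Fin κ)) (hfc : Continuous f)
    (hfb : Bornology.IsBounded (Set.range f)) (hsec : ∀ y : Y, π (f y) = y)

    (y : Y) (t : ℝ) (ht : 0 < t) :
    HasDerivWithinAt (fun s => iQ Y π f s y)
      (-(iDm Y π f y t)^2 / (2*t^2)) (Set.Iio t) t :=
  stmt_11_general κ Y π f hfb y t ht
end
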